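/- Balance of gaps around a critical point: let N≥2, x ∈ ℝ^N_<, set P(λ)=∏_{k=1}^N(λ−x_k), let j∈{1,…,N−1} and let ζ be the unique zero of P′ lying in the open interval (x_j, x_{j+1}). Then (1/N)·|x_j − ζ| ≤ |x_{j+1} − ζ| ≤ N·|x_j − ζ|. -/

import Mathlib

/-- The monic polynomial `P(λ) = ∏_k (λ − x_k)`, as a function. -/
noncomputable def Pprod {N : ℕ} (x : Fin N → ℝ) (t : ℝ) : ℝ := ∏ k, (t - x k)

def inclL {N : ℕ} (j : Fin (N - 1)) : Fin N := ⟨j.1, lt_of_lt_of_le j.2 (Nat.sub_le N 1)⟩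
def inclR {N : ℕ} (j : Fin (N - 1)) : Fin N := ⟨j.1 + 1, by have := j.2; omega⟩

/-!
At a critical point `ζ` of `P` that is not a root, the logarithmic derivative gives
`∑ₖ 1/(ζ - xₖ) = 0`. Put `a = ζ - x_j` and `b = x_{j+1} - ζ`. No root lies strictly between
`x_j` and `x_{j+1}`, so every term lies in `[-1/b, 1/a]`. Isolating the term of `x_{j+1}`
gives `1/b ≤ (N - 1)/a`, and isolating that of `x_j` gives `1/a ≤ (N - 1)/b`.
-/

open Finset

theorem logDeriv_sub_const {𝕜 : Type*} [NontriviallyNormedField 𝕜] (c t : 𝕜) :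
    logDeriv (fun s ↦ s - c) t = (t - c)⁻¹ := by
  simp [logDeriv_apply]

theorem sum_inv_sub_eq_zero_of_deriv_prod_eq_zero {𝕜 ι : Type*} [NontriviallyNormedField 𝕜]
    {s : Finset ι} {x : ι → 𝕜} {t : 𝕜} (hne : ∀ k ∈ s, t ≠ x k)
    (hcrit : deriv (fun u ↦ ∏ k ∈ s, (u - x k)) t = 0) :
    ∑ k ∈ s, (t - x k)⁻¹ = 0 := by
  have hlog : logDeriv (fun u ↦ ∏ k ∈ s, (u - x k)) t = 0 := by
    rw [logDeriv_apply, hcrit, zero_div]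
  rw [logDeriv_prod (fun k hk ↦ sub_ne_zero.2 (hne k hk)) (fun k _ ↦ by fun_prop)] at hlog
  simpa only [logDeriv_sub_const] using hlog

theorem neg_le_card_sub_one_nsmul_of_sum_eq_zero {ι M : Type*} [AddCommGroup M] [PartialOrder M]
    [IsOrderedAddMonoid M] {s : Finset ι} {f : ι → M} {i : ι} {B : M} (hi : i ∈ s)
    (hsum : ∑ k ∈ s, f k = 0) (hB : ∀ k ∈ s, f k ≤ B) :
    -f i ≤ (#s - 1) • B := by
  classical
  have hrest : ∑ k ∈ s.erase i, f k = -f i :=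
    eq_neg_of_add_eq_zero_right ((add_sum_erase s f hi).trans hsum)
  rw [← hrest, ← card_erase_of_mem hi]
  exact sum_le_card_nsmul _ _ _ fun k hk ↦ hB k (mem_of_mem_erase hk)

section OrderedField

variable {K : Type*} [Field K] [LinearOrder K] [IsStrictOrderedRing K]

theorem inv_mem_Icc_of_le_or_le {a b d : K} (ha : 0 < a) (hb : 0 < b) (hd : d ≤ -b ∨ a ≤ d) :
    d⁻¹ ∈ Set.Icc (-b⁻¹) a⁻¹ := by
  rcases hd with hd | hd
  · have hneg : d < 0 := by linarith
    refine ⟨?_, (inv_lt_zero.2 hneg).le.trans (inv_pos.2 ha).le⟩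
    rw [← inv_neg]
    exact (inv_le_inv_of_neg (by linarith) hneg).2 hd
  · exact ⟨(neg_nonpos.2 (inv_pos.2 hb).le).trans (inv_pos.2 (ha.trans_le hd)).le,
      inv_anti₀ ha hd⟩

theorem le_mul_of_inv_le_mul_inv {a b m : K} (ha : 0 < a) (hb : 0 < b)
    (h : b⁻¹ ≤ m * a⁻¹) : a ≤ m * b := by
  have := mul_le_mul_of_nonneg_left h (mul_pos ha hb).le
  field_simp at this
  linarith

end OrderedField

theorem le_inclL_or_inclR_le {N : ℕ} (j : Fin (N - 1)) (k : Fin N) :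
    k ≤ inclL j ∨ inclR j ≤ k := by
  simp only [Fin.le_def, inclL, inclR]; omega

theorem gap_balance_general (N : ℕ) (x : Fin N → ℝ) (hx : StrictMono x)
    (j : Fin (N - 1)) (zeta : ℝ)
    (hmem : zeta ∈ Set.Ioo (x (inclL j)) (x (inclR j)))
    (hcrit : deriv (Pprod x) zeta = 0) :
    (1 / N : ℝ) * |x (inclL j) - zeta| ≤ |x (inclR j) - zeta| ∧
    |x (inclR j) - zeta| ≤ (N : ℝ) * |x (inclL j) - zeta| := by
  set a := zeta - x (inclL j)
  set b := x (inclR j) - zeta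
  have ha : 0 < a := sub_pos.2 hmem.1
  have hb : 0 < b := sub_pos.2 hmem.2
  have hside : ∀ k, zeta - x k ≤ -b ∨ a ≤ zeta - x k := fun k ↦
    (le_inclL_or_inclR_le j k).symm.imp (fun h ↦ by linarith [hx.monotone h])
      (fun h ↦ by linarith [hx.monotone h])
  have hsum : ∑ k, (zeta - x k)⁻¹ = 0 :=
    sum_inv_sub_eq_zero_of_deriv_prod_eq_zero (fun k _ ↦ sub_ne_zero.1 fun h0 ↦ by
      rcases hside k with h | h <;> linarith) hcrit
  have hy k : (zeta - x k)⁻¹ ∈ Set.Icc (-b⁻¹) a⁻¹ :=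
    inv_mem_Icc_of_le_or_le ha hb (hside k)
  have hcoef (c : ℝ) (hc : 0 ≤ c) : (#(univ : Finset (Fin N)) - 1) • c ≤ N * c := by
    rw [card_univ, Fintype.card_fin, nsmul_eq_mul]
    exact mul_le_mul_of_nonneg_right (Nat.cast_le.2 (Nat.sub_le N 1)) hc
  have hba : b⁻¹ ≤ N * a⁻¹ := by
    have h := neg_le_card_sub_one_nsmul_of_sum_eq_zero (mem_univ (inclR j)) hsum
      fun k _ ↦ (hy k).2
    rw [show zeta - x (inclR j) = -b by ring, inv_neg, neg_neg] at h
    exact h.trans (hcoef _ (inv_pos.2 ha).le)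
  have hab : a⁻¹ ≤ N * b⁻¹ := by
    have h := neg_le_card_sub_one_nsmul_of_sum_eq_zero (f := fun k ↦ -(zeta - x k)⁻¹)
      (mem_univ (inclL j)) (by rw [sum_neg_distrib, hsum, neg_zero]) fun k _ ↦ neg_le.1 (hy k).1
    rw [neg_neg] at h
    exact h.trans (hcoef _ (inv_pos.2 hb).le)
  have hN : (0 : ℝ) < N := Nat.cast_pos.2 (by have := j.2; omega)
  rw [abs_sub_comm, abs_of_pos ha, abs_of_pos hb, one_div, inv_mul_le_iff₀ hN]
  exact ⟨le_mul_of_inv_le_mul_inv ha hb hba, le_mul_of_inv_le_mul_inv hb ha hab⟩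

/-- **Balance of gaps around a critical point**:
`(1/N)|x_j − ζ| ≤ |x_{j+1} − ζ| ≤ N |x_j − ζ|` for the unique zero `ζ` of `P′` in
`(x_j, x_{j+1})`. -/
theorem gap_balance (N : ℕ) (hN : 2 ≤ N) (x : Fin N → ℝ) (hx : StrictMono x)
    (j : Fin (N - 1)) (zeta : ℝ)
    (hmem : zeta ∈ Set.Ioo (x (inclL j)) (x (inclR j)))
    (hcrit : deriv (Pprod x) zeta = 0) :
    (1 / N : ℝ) * |x (inclL j) - zeta| ≤ |x (inclR j) - zeta| ∧
    |x (inclR j) - zeta| ≤ (N : ℝ) * |x (inclL j) - zeta| :=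
  gap_balance_general N x hx j zeta hmem hcrit
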